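/- Let a, b, c, d be positive integers with a + b = c + d. Then the Octopus position [1^a, 2^b | 1^c, 2^d] with finger count 2 is an N-position: whichever player moves first has a winning strategy. -/
import Mathlib


namespace Octopus

/-- An Octopus position: the multiset of Left's hand values and the
multiset of Right's hand values. -/
abbrev Pos : Type := Multiset ℕ × Multiset ℕ

/-- All hand values lie in `{1, ..., n}`, where `n` is the finger count. -/
def Valid (n : ℕ) (P : Pos) : Prop :=
  (∀ x ∈ P.1, 1 ≤ x ∧ x ≤ n) ∧ (∀ y ∈ P.2, 1 ≤ y ∧ y ≤ n)

/-- A move of Left with finger count `n`: Left chooses an attacking hand `x` in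
her multiset and a target hand `y` in Right's multiset; that copy of `y` is
replaced by `x + y`, or removed from play if `x + y > n`. -/
def LeftMove (n : ℕ) (P Q : Pos) : Prop :=
  ∃ x ∈ P.1, ∃ y ∈ P.2,
    Q.1 = P.1 ∧
    Q.2 = if x + y ≤ n then (x + y) ::ₘ P.2.erase y else P.2.erase y

/-- A move of Right with finger count `n`: Right chooses an attacking hand `y` in
his multiset and a target hand `x` in Left's multiset; that copy of `x` is
replaced by `x + y`, or removed from play if `x + y > n`. -/
def RightMove (n : ℕ) (P Q : Pos) : Prop :=
  ∃ x ∈ P.1, ∃ y ∈ P.2,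
    Q.2 = P.2 ∧
    Q.1 = if x + y ≤ n then (x + y) ::ₘ P.1.erase x else P.1.erase x

/-- `LeftWinsFirst n P`: Left, moving first from `P`, has a winning strategy
(normal play: a player with no move on their turn loses). -/
inductive LeftWinsFirst (n : ℕ) : Pos → Prop
  | intro (P Q : Pos) (hmove : LeftMove n P Q)
      (hwin : ∀ R, RightMove n Q R → LeftWinsFirst n R) : LeftWinsFirst n P

/-- `RightWinsFirst n P`: Right, moving first from `P`, has a winning strategy. -/
inductive RightWinsFirst (n : ℕ) : Pos → Prop
  | intro (P Q : Pos) (hmove : RightMove n P Q)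
      (hwin : ∀ R, LeftMove n Q R → RightWinsFirst n R) : RightWinsFirst n P

/-- Left, moving second from `P`, has a winning strategy. -/
def LeftWinsSecond (n : ℕ) (P : Pos) : Prop :=
  ∀ Q, RightMove n P Q → LeftWinsFirst n Q

/-- Right, moving second from `P`, has a winning strategy. -/
def RightWinsSecond (n : ℕ) (P : Pos) : Prop :=
  ∀ Q, LeftMove n P Q → RightWinsFirst n Q

/-- `N`-position: whichever player moves first wins. -/
def NPos (n : ℕ) (P : Pos) : Prop := LeftWinsFirst n P ∧ RightWinsFirst n P

/-- `P`-position: whichever player moves second wins. -/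
def PPos (n : ℕ) (P : Pos) : Prop := LeftWinsSecond n P ∧ RightWinsSecond n P

/-- `L`-position: Left wins whoever moves first. -/
def LPos (n : ℕ) (P : Pos) : Prop := LeftWinsFirst n P ∧ LeftWinsSecond n P

/-- `R`-position: Right wins whoever moves first. -/
def RPos (n : ℕ) (P : Pos) : Prop := RightWinsFirst n P ∧ RightWinsSecond n P

/-- The position `[1^a, 2^b | 1^c, 2^d]` (used with finger count 2). -/
def two (a b c d : ℕ) : Pos :=
  (Multiset.replicate a 1 + Multiset.replicate b 2,
   Multiset.replicate c 1 + Multiset.replicate d 2)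


open Multiset

def pL (a b c d : ℕ) : Prop :=
  1 ≤ a + b ∧ 1 ≤ c + d ∧
    ((c + d ≤ a + b ∧ ¬(d = 0 ∧ c = a + b ∧ a % 2 = 1)) ∨
      (b = 0 ∧ c % 2 = 1 ∧ 1 ≤ d ∧ c + d = a + 1))

lemma step1 {a b c d : ℕ} (h : pL a b c d) :
    (1 ≤ a ∧ 1 ≤ c ∧ ¬ pL (c-1) (d+1) a b) ∨
    (1 ≤ b ∧ 1 ≤ c ∧ ¬ pL (c-1) d a b) ∨
    (1 ≤ a + b ∧ 1 ≤ d ∧ ¬ pL c (d-1) a b) := by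
  unfold pL at *; omega

lemma step2 {a b c d : ℕ} (h : ¬ pL c d a b) :
    (1 ≤ a → 1 ≤ c → pL (a-1) (b+1) c d) ∧
    (1 ≤ a → 1 ≤ d → pL (a-1) b c d) ∧
    (1 ≤ b → 1 ≤ c + d → pL a (b-1) c d) := by
  unfold pL at *; omega

lemma mem1 {a b : ℕ} (ha : 1 ≤ a) :
    (1:ℕ) ∈ Multiset.replicate a 1 + Multiset.replicate b 2 := by
  rw [Multiset.mem_add, Multiset.mem_replicate]; omega

lemma mem2 {a b : ℕ} (hb : 1 ≤ b) :
    (2:ℕ) ∈ Multiset.replicate a 1 + Multiset.replicate b 2 := by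
  rw [Multiset.mem_add, Multiset.mem_replicate, Multiset.mem_replicate]; omega

lemma erase1 {c d : ℕ} (hc : 1 ≤ c) :
    (Multiset.replicate c 1 + Multiset.replicate d 2).erase 1
      = Multiset.replicate (c-1) 1 + Multiset.replicate d 2 := by
  obtain ⟨c', rfl⟩ : ∃ c', c = c' + 1 := ⟨c - 1, by omega⟩
  simp [Multiset.replicate_succ, Multiset.cons_add]

lemma erase2 {c d : ℕ} (hd : 1 ≤ d) :
    (Multiset.replicate c 1 + Multiset.replicate d 2).erase 2
      = Multiset.replicate c 1 + Multiset.replicate (d-1) 2 := by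
  obtain ⟨d', rfl⟩ : ∃ d', d = d' + 1 := ⟨d - 1, by omega⟩
  simp [Multiset.replicate_succ, Multiset.add_cons]

lemma lmove1 {a b c d : ℕ} (ha : 1 ≤ a) (hc : 1 ≤ c) :
    LeftMove 2 (two a b c d) (two a b (c-1) (d+1)) := by
  refine ⟨1, mem1 ha, 1, mem1 hc, rfl, ?_⟩
  simp only [two, erase1 hc]
  norm_num [Multiset.replicate_succ, Multiset.add_cons]

lemma lmove2 {a b c d : ℕ} (hb : 1 ≤ b) (hc : 1 ≤ c) :
    LeftMove 2 (two a b c d) (two a b (c-1) d) := by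
  refine ⟨2, mem2 hb, 1, mem1 hc, rfl, ?_⟩
  simp only [two, erase1 hc]
  norm_num

lemma lmove3 {a b c d : ℕ} (hab : 1 ≤ a + b) (hd : 1 ≤ d) :
    LeftMove 2 (two a b c d) (two a b c (d-1)) := by
  rcases Nat.lt_or_ge 0 a with ha | ha
  · refine ⟨1, mem1 ha, 2, mem2 hd, rfl, ?_⟩
    simp only [two, erase2 hd]
    norm_num
  · refine ⟨2, mem2 (by omega), 2, mem2 hd, rfl, ?_⟩
    simp only [two, erase2 hd]
    norm_num

lemma leftMove_cases {a b c d : ℕ} {Q : Pos} (h : LeftMove 2 (two a b c d) Q) :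
    (1 ≤ a ∧ 1 ≤ c ∧ Q = two a b (c-1) (d+1)) ∨
    (1 ≤ b ∧ 1 ≤ c ∧ Q = two a b (c-1) d) ∨
    (1 ≤ a + b ∧ 1 ≤ d ∧ Q = two a b c (d-1)) := by
  obtain ⟨x, hx, y, hy, h1, h2⟩ := h
  have hQ : Q = (Q.1, Q.2) := rfl
  simp only [two] at hx hy h1 h2
  rw [Multiset.mem_add, Multiset.mem_replicate, Multiset.mem_replicate] at hx hy
  rcases hx with ⟨ha, rfl⟩ | ⟨hb, rfl⟩ <;> rcases hy with ⟨hc, rfl⟩ | ⟨hd, rfl⟩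
  · left
    refine ⟨by omega, by omega, ?_⟩
    rw [hQ, h1, h2]
    norm_num [two, erase1 (show 1 ≤ c by omega), Multiset.replicate_succ,
      Multiset.add_cons]
  · right; right
    refine ⟨by omega, by omega, ?_⟩
    rw [hQ, h1, h2]
    norm_num [two, erase2 (show 1 ≤ d by omega)]
  · right; left
    refine ⟨by omega, by omega, ?_⟩
    rw [hQ, h1, h2]
    norm_num [two, erase1 (show 1 ≤ c by omega)]
  · right; right
    refine ⟨by omega, by omega, ?_⟩
    rw [hQ, h1, h2]
    norm_num [two, erase2 (show 1 ≤ d by omega)]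

lemma move_swap {n : ℕ} {P Q : Pos} :
    LeftMove n P Q ↔ RightMove n (P.2, P.1) (Q.2, Q.1) := by
  constructor
  · rintro ⟨x, hx, y, hy, h1, h2⟩
    exact ⟨y, hy, x, hx, h1, by rwa [Nat.add_comm y x]⟩
  · rintro ⟨x, hx, y, hy, h1, h2⟩
    exact ⟨y, hy, x, hx, h1, by rwa [Nat.add_comm y x]⟩

lemma two_swap (a b c d : ℕ) : ((two a b c d).2, (two a b c d).1) = two c d a b := rfl

lemma rightMove_cases {a b c d : ℕ} {Q : Pos} (h : RightMove 2 (two a b c d) Q) :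
    (1 ≤ c ∧ 1 ≤ a ∧ Q = two (a-1) (b+1) c d) ∨
    (1 ≤ d ∧ 1 ≤ a ∧ Q = two (a-1) b c d) ∨
    (1 ≤ c + d ∧ 1 ≤ b ∧ Q = two a (b-1) c d) := by
  have h' : LeftMove 2 (two c d a b) (Q.2, Q.1) := move_swap.mpr h
  have heta : ((Q.2, Q.1).2, (Q.2, Q.1).1) = Q := rfl
  rcases leftMove_cases h' with ⟨h1, h2, he⟩ | ⟨h1, h2, he⟩ | ⟨h1, h2, he⟩
  · exact Or.inl ⟨h1, h2, by rw [← heta, he, two_swap]⟩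
  · exact Or.inr (Or.inl ⟨h1, h2, by rw [← heta, he, two_swap]⟩)
  · exact Or.inr (Or.inr ⟨h1, h2, by rw [← heta, he, two_swap]⟩)

lemma leftWins_of_pL : ∀ m a b c d, 2*a+b+2*c+d ≤ m → pL a b c d →
    LeftWinsFirst 2 (two a b c d) := by
  intro m
  induction m with
  | zero => intro a b c d hm hp; exfalso; unfold pL at hp; omega
  | succ m ih =>
    intro a b c d hm hp
    have key : ∀ a' b' c' d', ¬ pL c' d' a' b' → 2*a'+b'+2*c'+d'+1 ≤ 2*a+b+2*c+d →
        ∀ R, RightMove 2 (two a' b' c' d') R → LeftWinsFirst 2 R := by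
      intro a' b' c' d' hq hmeas R hR
      rcases rightMove_cases hR with ⟨h1, h2, rfl⟩ | ⟨h1, h2, rfl⟩ | ⟨h1, h2, rfl⟩
      · exact ih _ _ _ _ (by omega) ((step2 hq).1 h2 h1)
      · exact ih _ _ _ _ (by omega) ((step2 hq).2.1 h2 h1)
      · exact ih _ _ _ _ (by omega) ((step2 hq).2.2 h2 h1)
    rcases step1 hp with ⟨ha, hc, hq⟩ | ⟨hb, hc, hq⟩ | ⟨hab, hd, hq⟩
    · exact LeftWinsFirst.intro _ _ (lmove1 ha hc) (key a b (c-1) (d+1) hq (by omega))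
    · exact LeftWinsFirst.intro _ _ (lmove2 hb hc) (key a b (c-1) d hq (by omega))
    · exact LeftWinsFirst.intro _ _ (lmove3 hab hd) (key a b c (d-1) hq (by omega))

lemma leftWins_swap {n : ℕ} {P : Pos} (h : LeftWinsFirst n P) :
    RightWinsFirst n (P.2, P.1) := by
  induction h with
  | intro P Q hmove hwin ih =>
    exact RightWinsFirst.intro _ (Q.2, Q.1) (move_swap.mp hmove)
      (fun R hR => ih (R.2, R.1) (move_swap.mp hR))


/-- for positive `a, b, c, d` with `a + b = c + d`, the position
`[1^a, 2^b | 1^c, 2^d]` with finger count 2 is an N-position. -/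
theorem fingerTwo_all_positive (a b c d : ℕ)
    (ha : 0 < a) (hb : 0 < b) (hc : 0 < c) (hd : 0 < d)
    (h : a + b = c + d) :
    NPos 2 (two a b c d) := by
  constructor
  · exact leftWins_of_pL _ a b c d le_rfl (by unfold pL; omega)
  · exact leftWins_swap (leftWins_of_pL (2*c+d+2*a+b) c d a b le_rfl (by unfold pL; omega))

end Octopus
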